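/- Let m ≥ 5 and let τ be any square of the m×(m−2) projective checkerboard B(m, m−2). There is a hamiltonian path H from (m−2, 0) to τ in B(m, m−2) in which every non-terminal diagonal travels north if and only if τ = (⌊m/2⌋ − 1, ⌊(m−1)/2⌋ − 1). -/

import Mathlib

namespace ProjBoard

/-- `(p,q)` is a square of the `m × n` board. -/
def Sq (m n : ℕ) (s : ℕ × ℕ) : Prop := s.1 < m ∧ s.2 < n

/-- The east move on the `m × n` projective checkerboard. -/
def moveE (m n : ℕ) (s : ℕ × ℕ) : ℕ × ℕ :=
  if s.1 < m - 1 then (s.1 + 1, s.2) else (0, n - 1 - s.2)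

/-- The north move on the `m × n` projective checkerboard. -/
def moveN (m n : ℕ) (s : ℕ × ℕ) : ℕ × ℕ :=
  if s.2 < n - 1 then (s.1, s.2 + 1) else (m - 1 - s.1, 0)

/-- Directed edge of the board: from a square `s` to `sE` or `sN`. -/
def Edge (m n : ℕ) (s t : ℕ × ℕ) : Prop :=
  Sq m n s ∧ (t = moveE m n s ∨ t = moveN m n s)

/-- A hamiltonian path, recorded as the list of squares it visits in order. -/
def IsHamPath (m n : ℕ) (l : List (ℕ × ℕ)) : Prop :=
  l.Chain' (Edge m n) ∧ l.Nodup ∧ ∀ s, Sq m n s ↔ s ∈ l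

/-- A hamiltonian path with initial square `ι` and terminal square `τ`. -/
def HamPathFromTo (m n : ℕ) (ι τ : ℕ × ℕ) (l : List (ℕ × ℕ)) : Prop :=
  IsHamPath m n l ∧ l.head? = some ι ∧ l.getLast? = some τ

/-- The square `s` travels east in the hamiltonian path `l`:
the edge from `s` to `sE` belongs to `l`. -/
def TravelsEast (m n : ℕ) (l : List (ℕ × ℕ)) (s : ℕ × ℕ) : Prop :=
  ∃ i : ℕ, l[i]? = some s ∧ l[i + 1]? = some (moveE m n s)

/-- The square `s` travels north in the hamiltonian path `l`:
the edge from `s` to `sN` belongs to `l`. -/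
def TravelsNorth (m n : ℕ) (l : List (ℕ × ℕ)) (s : ℕ × ℕ) : Prop :=
  ∃ i : ℕ, l[i]? = some s ∧ l[i + 1]? = some (moveN m n s)

/-- Two squares lie in the same (direction-forcing) diagonal. -/
def SameDiag (m n : ℕ) (s t : ℕ × ℕ) : Prop :=
  s.1 + s.2 = t.1 + t.2 ∨ s.1 + s.2 + (t.1 + t.2) = m + n - 3

/-- The southeasternmost square of the subdiagonal `S_b`. -/
def tauPlus (m n b : ℕ) : ℕ × ℕ :=
  if b ≤ m - 1 then (b, 0) else (m - 1, b - (m - 1))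


/-!
On `B(m, m - 2)` the subdiagonals `S_{m-3}` and `S_{m-2}` make up the single diagonal
`D_{m-3}`, and every other diagonal is required to travel north. If the terminal square were off
`D_{m-3}`, the square `(1, m - 3)` would travel north into the initial square `(m - 2, 0)`; if it were on `S_{m-2}`,
columns `0` and `m - 1` would close up into a cycle of northward moves. So `τ = (t, m - 3 - t)`,
and since every square has at most one predecessor and one successor, `S_{m-2}` is forced to
travel east, the squares of `S_{m-3}` west of `τ` east, and those east of `τ` north. The path is
then the orbit of the explicit map `forcedNext m t`, which sweeps the board in rounds of `2m - 1`
squares and reaches `(t, m - 3 - t)` at step `m (m - 2) - 1` exactly when `t = ⌊m/2⌋ - 1`; for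
that `t` its first `m (m - 2)` squares form the required hamiltonian path.
-/

section Follows

variable {α : Type*} {l : List α} {a b c : α}

def Follows (l : List α) (a b : α) : Prop :=
  ∃ i, l[i]? = some a ∧ l[i + 1]? = some b

theorem index_unique (hl : l.Nodup) {i j : ℕ} (hi : l[i]? = some a) (hj : l[j]? = some a) :
    i = j :=
  (List.getElem?_inj (List.getElem?_eq_some_iff.mp hi).1 hl).mp (hi.trans hj.symm)

theorem Follows.getElem?_succ (hl : l.Nodup) (h : Follows l a b) {i : ℕ}
    (hi : l[i]? = some a) : l[i + 1]? = some b := by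
  obtain ⟨j, hj, hj'⟩ := h
  rwa [index_unique hl hi hj]

theorem Follows.right_unique (hl : l.Nodup) (hb : Follows l a b) (hc : Follows l a c) :
    b = c := by
  obtain ⟨i, hi, hi'⟩ := hb
  exact Option.some_injective _ (hi'.symm.trans (hc.getElem?_succ hl hi))

theorem Follows.left_unique (hl : l.Nodup) (ha : Follows l a c) (hb : Follows l b c) :
    a = b := by
  obtain ⟨i, hi, hi'⟩ := ha
  obtain ⟨j, hj, hj'⟩ := hb
  obtain rfl : i = j := by have := index_unique hl hi' hj'; omega
  exact Option.some_injective _ (hi.symm.trans hj)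

theorem not_follows_of_head? (hl : l.Nodup) (h : l.head? = some b) : ¬ Follows l a b := by
  rintro ⟨i, -, hi⟩
  rw [List.head?_eq_getElem?] at h
  have := index_unique hl hi h
  omega

theorem not_follows_of_getLast? (hl : l.Nodup) (h : l.getLast? = some a) :
    ¬ Follows l a b := by
  rintro ⟨i, hi, hi'⟩
  rw [List.getLast?_eq_getElem?] at h
  have := index_unique hl hi h
  have := (List.getElem?_eq_some_iff.mp hi').1
  omega

theorem not_follows_cycle (hl : l.Nodup) {g : ℕ → α} {D : ℕ} (hD : 0 < D)
    (hg : ∀ e < D, Follows l (g e) (g (e + 1))) (hcycle : g D = g 0) : False := by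
  obtain ⟨i, hi, -⟩ := hg 0 hD
  have walk : ∀ d ≤ D, l[i + d]? = some (g d) := by
    intro d
    induction d with
    | zero => simpa using hi
    | succ d ih => exact fun hd => (hg d (by omega)).getElem?_succ hl (ih (by omega))
  have := index_unique hl (hcycle ▸ walk D le_rfl) hi
  omega

theorem getElem?_eq_iterate {f : α → α} (hl : l.Nodup) (hhead : l.head? = some a)
    (hlast : l.getLast? = some b) (hf : ∀ x ∈ l, x ≠ b → Follows l x (f x)) :
    ∀ i < l.length, l[i]? = some (f^[i] a) := by
  intro i
  induction i with
  | zero => simpa [List.head?_eq_getElem?] using fun _ => hhead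
  | succ i ih =>
    intro hi
    have hx := ih (by omega)
    have hxb : f^[i] a ≠ b := by
      rintro hxb
      rw [List.getLast?_eq_getElem?] at hlast
      have := index_unique hl (hxb ▸ hx) hlast
      omega
    rw [Function.iterate_succ_apply']
    exact (hf _ (List.mem_of_getElem? hx) hxb).getElem?_succ hl hx

end Follows

section Board

variable {m n : ℕ} {l : List (ℕ × ℕ)} {ι τ s : ℕ × ℕ}

theorem sq_moveE (hs : Sq m n s) : Sq m n (moveE m n s) := by
  unfold moveE Sq at *; split <;> constructor <;> simp only <;> omega

theorem sq_moveN (hs : Sq m n s) : Sq m n (moveN m n s) := by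
  unfold moveN Sq at *; split <;> constructor <;> simp only <;> omega

theorem moveE_of_lt {p q : ℕ} (hp : p + 1 < m) : moveE m n (p, q) = (p + 1, q) := by
  unfold moveE
  rw [if_pos (by dsimp only; omega)]

theorem moveN_of_lt {p q : ℕ} (hq : q + 1 < n) : moveN m n (p, q) = (p, q + 1) := by
  unfold moveN
  rw [if_pos (by dsimp only; omega)]

theorem moveN_of_add_one_eq {p q : ℕ} (hq : q + 1 = n) : moveN m n (p, q) = (m - 1 - p, 0) := by
  unfold moveN
  rw [if_neg (by dsimp only; omega)]

theorem iterate_moveN_of_lt {p e : ℕ} (he : e < n) : (moveN m n)^[e] (p, 0) = (p, e) := by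
  induction e with
  | zero => rfl
  | succ e ih => rw [Function.iterate_succ_apply', ih (by omega), moveN_of_lt he]

theorem iterate_moveN_self {p : ℕ} (hn : 0 < n) : (moveN m n)^[n] (p, 0) = (m - 1 - p, 0) := by
  obtain ⟨k, rfl⟩ := Nat.exists_eq_add_one.mpr hn
  rw [Function.iterate_succ_apply', iterate_moveN_of_lt (Nat.lt_succ_self k),
    moveN_of_add_one_eq rfl]

theorem Edge.sq_right {t : ℕ × ℕ} (h : Edge m n s t) : Sq m n t := by
  rcases h with ⟨hs, rfl | rfl⟩
  exacts [sq_moveE hs, sq_moveN hs]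

theorem Edge.eq_west_or_south {y : ℕ × ℕ} {a b : ℕ} (h : Edge m n y (a, b)) (ha : 1 ≤ a)
    (hb : 1 ≤ b) : y = (a - 1, b) ∨ y = (a, b - 1) := by
  obtain ⟨y₁, y₂⟩ := y
  obtain ⟨-, h | h⟩ := h
  · left
    simp only [moveE] at h
    split at h <;> simp only [Prod.mk.injEq] at h ⊢ <;> omega
  · right
    simp only [moveN] at h
    split at h <;> simp only [Prod.mk.injEq] at h ⊢ <;> omega

theorem toFinset_eq_of_mem_iff (h : ∀ s, Sq m n s ↔ s ∈ l) :
    l.toFinset = Finset.range m ×ˢ Finset.range n := by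
  ext s
  simp [← h s, Sq]

theorem IsHamPath.length_eq (h : IsHamPath m n l) : l.length = m * n := by
  rw [← List.toFinset_card_of_nodup h.2.1, toFinset_eq_of_mem_iff h.2.2]
  simp

theorem IsHamPath.follows_moveE_or_moveN (h : IsHamPath m n l) (hlast : l.getLast? = some τ)
    (hs : Sq m n s) (hsτ : s ≠ τ) :
    Follows l s (moveE m n s) ∨ Follows l s (moveN m n s) := by
  obtain ⟨i, hi⟩ := List.mem_iff_getElem?.mp ((h.2.2 s).mp hs)
  obtain ⟨hil, rfl⟩ := List.getElem?_eq_some_iff.mp hi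
  have hi1 : i + 1 < l.length := by
    rw [List.getLast?_eq_getElem?] at hlast
    by_contra hge
    exact hsτ (Option.some_injective _ (hi.symm.trans (by rwa [show i = l.length - 1 by omega])))
  obtain ⟨-, hE | hN⟩ := List.isChain_iff_getElem.mp h.1 i hi1
  · exact .inl ⟨i, hi, by rw [List.getElem?_eq_getElem hi1, hE]⟩
  · exact .inr ⟨i, hi, by rw [List.getElem?_eq_getElem hi1, hN]⟩

theorem IsHamPath.exists_edge_follows (h : IsHamPath m n l) (hhead : l.head? = some ι)
    (hs : Sq m n s) (hsι : s ≠ ι) : ∃ y, Edge m n y s ∧ Follows l y s := by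
  obtain ⟨i, hi⟩ := List.mem_iff_getElem?.mp ((h.2.2 s).mp hs)
  obtain ⟨hil, rfl⟩ := List.getElem?_eq_some_iff.mp hi
  obtain ⟨j, rfl⟩ : ∃ j, i = j + 1 := by
    refine Nat.exists_eq_add_one.mpr (Nat.pos_of_ne_zero fun hi0 => hsι ?_)
    subst hi0
    rw [List.head?_eq_getElem?] at hhead
    exact Option.some_injective _ (hi.symm.trans hhead)
  exact ⟨l[j], List.isChain_iff_getElem.mp h.1 j hil,
    j, List.getElem?_eq_getElem (by omega), hi⟩

theorem isHamPath_map_iterate {f : ℕ × ℕ → ℕ × ℕ} (hf : ∀ s, Sq m n s → Edge m n s (f s))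
    (hι : Sq m n ι) (hcover : ∀ s, Sq m n s → ∃ i < m * n, f^[i] ι = s) :
    IsHamPath m n ((List.range (m * n)).map (f^[·] ι)) := by
  have hsq : ∀ i, Sq m n (f^[i] ι) := by
    intro i
    induction i with
    | zero => exact hι
    | succ i ih => rw [Function.iterate_succ_apply']; exact (hf _ ih).sq_right
  have hmem : ∀ s, Sq m n s ↔ s ∈ (List.range (m * n)).map (f^[·] ι) := by
    intro s
    simp only [List.mem_map, List.mem_range]
    exact ⟨hcover s, fun ⟨i, _, hi⟩ => hi ▸ hsq i⟩
  refine ⟨?_, ?_, hmem⟩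
  · show List.IsChain _ _
    rw [List.isChain_map, List.isChain_range]
    intro i _
    rw [Nat.succ_eq_add_one, Function.iterate_succ_apply']
    exact hf _ (hsq i)
  · refine Multiset.coe_nodup.mp (Multiset.toFinset_card_eq_card_iff_nodup.mp ?_)
    rw [Multiset.coe_card, List.length_map, List.length_range]
    exact (congrArg Finset.card (toFinset_eq_of_mem_iff hmem)).trans (by simp)

end Board

theorem iterate_trans {α : Type*} {f : α → α} {a b n : ℕ} {x y z : α}
    (h₁ : f^[a] x = y) (h₂ : f^[b] y = z) (h : n = b + a) : f^[n] x = z := by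
  subst h
  rw [Function.iterate_add_apply, h₁, h₂]

section ForcedNext

variable {m t p q r d j : ℕ}

def GoesEast (m t : ℕ) (s : ℕ × ℕ) : Prop :=
  s.1 + s.2 = m - 2 ∨ (s.1 + s.2 = m - 3 ∧ s.1 < t)

instance : DecidablePred (GoesEast m t) := fun _ => inferInstanceAs (Decidable (_ ∨ _))

def forcedNext (m t : ℕ) (s : ℕ × ℕ) : ℕ × ℕ :=
  if GoesEast m t s then moveE m (m - 2) s else moveN m (m - 2) s

theorem edge_forcedNext {s : ℕ × ℕ} (hs : Sq m (m - 2) s) :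
    Edge m (m - 2) s (forcedNext m t s) := by
  refine ⟨hs, ?_⟩
  unfold forcedNext
  split
  exacts [.inl rfl, .inr rfl]

theorem forcedNext_of_goesEast (h : GoesEast m t (p, q)) (hp : p < m - 1) :
    forcedNext m t (p, q) = (p + 1, q) := by
  simp [forcedNext, h, moveE, hp]

theorem forcedNext_of_not_goesEast (h : ¬ GoesEast m t (p, q)) (hq : q < m - 3) :
    forcedNext m t (p, q) = (p, q + 1) := by
  simp only [forcedNext, h, moveN, if_false]
  rw [if_pos (by omega)]

theorem forcedNext_top (h : ¬ GoesEast m t (p, m - 3)) (hm : 3 ≤ m) (hr : m - 1 - p = r) :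
    forcedNext m t (p, m - 3) = (r, 0) := by
  simp only [forcedNext, h, moveN, if_false]
  rw [if_neg (by omega), hr]

theorem iterate_forcedNext_north (hN : ∀ e < d, ¬ GoesEast m t (p, q + e))
    (hr : q + d = r) (hrm : r ≤ m - 3) : (forcedNext m t)^[d] (p, q) = (p, r) := by
  subst hr
  induction d with
  | zero => rfl
  | succ d ih =>
    rw [Function.iterate_succ_apply', ih (fun e he => hN e (by omega)) (by omega),
      forcedNext_of_not_goesEast (hN d (by omega)) (by omega)]
    rfl

theorem iterate_forcedNext_column (hq : q ≤ m - 3) (hpq : p + q ≤ m - 3 ∨ t ≤ p ∧ p + q ≤ m - 2) :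
    (forcedNext m t)^[q] (p, 0) = (p, q) :=
  iterate_forcedNext_north (fun e he => by simp only [GoesEast]; omega) (by omega) hq

theorem iterate_forcedNext_low_east (hp : p < t) (ht : t ≤ m - 3) :
    (forcedNext m t)^[m - 2 - p] (p, 0) = (p + 1, m - 3 - p) := by
  have climb : (forcedNext m t)^[m - 3 - p] (p, 0) = (p, m - 3 - p) :=
    iterate_forcedNext_column (by omega) (.inl (by omega))
  have east : (forcedNext m t)^[1] (p, m - 3 - p) = (p + 1, m - 3 - p) :=
    forcedNext_of_goesEast (by simp only [GoesEast]; omega) (by omega)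
  exact iterate_trans climb east (by omega)

theorem iterate_forcedNext_low (hp : p < t) (ht : t ≤ m - 3) (hq₁ : m - 3 - p ≤ q)
    (hq₂ : q ≤ m - 3) : (forcedNext m t)^[q + 2] (p, 0) = (p + 2, q) := by
  have east : (forcedNext m t)^[1] (p + 1, m - 3 - p) = (p + 2, m - 3 - p) :=
    forcedNext_of_goesEast (by simp only [GoesEast]; omega) (by omega)
  have climb : (forcedNext m t)^[q - (m - 3 - p)] (p + 2, m - 3 - p) = (p + 2, q) :=
    iterate_forcedNext_north (fun e he => by simp only [GoesEast]; omega) (by omega) hq₂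
  exact iterate_trans (iterate_trans (iterate_forcedNext_low_east hp ht) east rfl) climb
    (by omega)

theorem iterate_forcedNext_high (ht : t < p) (hp : p ≤ m - 2) (hq₁ : m - 2 - p ≤ q)
    (hq₂ : q ≤ m - 3) : (forcedNext m t)^[q + 1] (p, 0) = (p + 1, q) := by
  have climb₁ : (forcedNext m t)^[m - 2 - p] (p, 0) = (p, m - 2 - p) :=
    iterate_forcedNext_column (by omega) (.inr ⟨ht.le, by omega⟩)
  have east : (forcedNext m t)^[1] (p, m - 2 - p) = (p + 1, m - 2 - p) :=
    forcedNext_of_goesEast (by simp only [GoesEast]; omega) (by omega)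
  have climb₂ : (forcedNext m t)^[q - (m - 2 - p)] (p + 1, m - 2 - p) = (p + 1, q) :=
    iterate_forcedNext_north (fun e he => by simp only [GoesEast]; omega) (by omega) hq₂
  exact iterate_trans (iterate_trans climb₁ east rfl) climb₂ (by omega)

theorem iterate_forcedNext_pass_low (hm : 5 ≤ m) (hp : p < t) (ht : t ≤ m - 3) :
    (forcedNext m t)^[m] (p, 0) = (m - 3 - p, 0) := by
  have wrap : (forcedNext m t)^[1] (p + 2, m - 3) = (m - 3 - p, 0) :=
    forcedNext_top (by simp only [GoesEast]; omega) (by omega) (by omega)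
  exact iterate_trans (iterate_forcedNext_low hp ht (by omega) le_rfl) wrap (by omega)

theorem iterate_forcedNext_pass_high (hm : 5 ≤ m) (ht : t < p) (hp : p ≤ m - 2) :
    (forcedNext m t)^[m - 1] (p, 0) = (m - 2 - p, 0) := by
  have wrap : (forcedNext m t)^[1] (p + 1, m - 3) = (m - 2 - p, 0) :=
    forcedNext_top (by simp only [GoesEast]; omega) (by omega) (by omega)
  exact iterate_trans (iterate_forcedNext_high ht hp (by omega) le_rfl) wrap (by omega)

/- Round `j` climbs column `m - 2 - j` to `S_{m-2}`, steps east, climbs column `m - 1 - j` and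
wraps to `(j, 0)`; it then climbs column `j` to `S_{m-3}`, steps east twice, climbs column `j + 2`
and wraps to `(m - 3 - j, 0)`. -/
theorem iterate_forcedNext_round (hm : 5 ≤ m) (hjt : j ≤ t) (hj : j + t ≤ m - 2) :
    (forcedNext m t)^[(2 * m - 1) * j] (m - 2, 0) = (m - 2 - j, 0) := by
  induction j with
  | zero => rfl
  | succ j ih =>
    have high : (forcedNext m t)^[m - 1] (m - 2 - j, 0) = (j, 0) := by
      rw [iterate_forcedNext_pass_high hm (by omega) (by omega)]
      congr 1
      omega
    have low : (forcedNext m t)^[m] (j, 0) = (m - 2 - (j + 1), 0) := by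
      rw [iterate_forcedNext_pass_low hm (by omega) (by omega)]
      congr 1
      omega
    refine iterate_trans (ih (by omega) (by omega)) (iterate_trans high low rfl) ?_
    rw [Nat.mul_succ]
    omega

theorem iterate_forcedNext_round_mid (hm : 5 ≤ m) (hjt : j ≤ t) (hj : j + t ≤ m - 3) :
    (forcedNext m t)^[(2 * m - 1) * j + (m - 1)] (m - 2, 0) = (j, 0) := by
  have high : (forcedNext m t)^[m - 1] (m - 2 - j, 0) = (j, 0) := by
    rw [iterate_forcedNext_pass_high hm (by omega) (by omega)]
    congr 1
    omega
  exact iterate_trans (iterate_forcedNext_round hm hjt (by omega)) high (by omega)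

theorem iterate_forcedNext_round_start (hm : 5 ≤ m) (hp : t ≤ p) (hpt : m - 2 ≤ p + t)
    (hpm : p ≤ m - 2) : (forcedNext m t)^[(2 * m - 1) * (m - 2 - p)] (m - 2, 0) = (p, 0) := by
  rw [iterate_forcedNext_round hm (by omega) (by omega)]
  congr 1
  omega

end ForcedNext

section Orbit

variable {m t : ℕ}

theorem exists_iterate_forcedNext_eq_terminal (hm : 5 ≤ m) (ht : t ≤ m - 3) :
    ∃ i, (forcedNext m t)^[i] (m - 2, 0) = (t, m - 3 - t) ∧ i < m * (m - 2) ∧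
      (i + 1 = m * (m - 2) ↔ t = m / 2 - 1) := by
  have climb : (forcedNext m t)^[m - 3 - t] (t, 0) = (t, m - 3 - t) :=
    iterate_forcedNext_column (Nat.sub_le _ _) (.inl (by omega))
  by_cases hlow : 2 * t + 3 ≤ m
  · refine ⟨(2 * m - 1) * t + (m - 1) + (m - 3 - t),
      iterate_trans (iterate_forcedNext_round_mid hm le_rfl (by omega)) climb (by omega), ?_⟩
    have hcard : m * (m - 2) =
        (2 * m - 1) * t + (m - 1) + (m - 3 - t) + 1 + (m - 1) * (m - 3 - 2 * t) := by
      zify [show 2 ≤ m by omega, show 1 ≤ 2 * m by omega, show 1 ≤ m by omega,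
        show t ≤ m - 3 by omega, show 3 ≤ m by omega, show 2 * t ≤ m - 3 by omega]
      ring
    have : (m - 1) * (m - 3 - 2 * t) = 0 ↔ m = 2 * t + 3 := by
      rw [Nat.mul_eq_zero]
      omega
    omega
  · refine ⟨(2 * m - 1) * (m - 2 - t) + (m - 3 - t), iterate_trans
      (iterate_forcedNext_round_start hm le_rfl (by omega) (by omega)) climb (by omega), ?_⟩
    have hcard : m * (m - 2) =
        (2 * m - 1) * (m - 2 - t) + (m - 3 - t) + 1 + m * (2 * t + 2 - m) := by
      zify [show 2 ≤ m by omega, show 1 ≤ 2 * m by omega, show t ≤ m - 2 by omega,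
        show t ≤ m - 3 by omega, show 3 ≤ m by omega, show m ≤ 2 * t + 2 by omega]
      ring
    have : m * (2 * t + 2 - m) = 0 ↔ m = 2 * t + 2 := by
      rw [Nat.mul_eq_zero]
      omega
    omega

theorem card_eq_of_eq_half (hm : 5 ≤ m) (ht : t = m / 2 - 1) :
    m = 2 * t + 2 ∧ m * (m - 2) = (2 * m - 1) * t + t ∨
      m = 2 * t + 3 ∧ m * (m - 2) = (2 * m - 1) * t + (m + t) := by
  rcases Nat.even_or_odd' m with ⟨k, rfl | rfl⟩
  · left
    obtain rfl : t = k - 1 := by omega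
    refine ⟨by omega, ?_⟩
    zify [show 2 ≤ 2 * k by omega, show 1 ≤ 2 * (2 * k) by omega, show 1 ≤ k by omega]
    ring
  · right
    obtain rfl : t = k - 1 := by omega
    refine ⟨by omega, ?_⟩
    zify [show 2 ≤ 2 * k + 1 by omega, show 1 ≤ 2 * (2 * k + 1) by omega, show 1 ≤ k by omega]
    ring

theorem round_index_lt_card (hm : 5 ≤ m) (ht : t = m / 2 - 1) (j r : ℕ)
    (h : j < t ∧ r < 2 * m - 1 ∨ j = t ∧ (r < t ∨ m = 2 * t + 3 ∧ r < m + t)) :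
    (2 * m - 1) * j + r < m * (m - 2) := by
  have hcard := card_eq_of_eq_half hm ht
  rcases h with ⟨hj, hr⟩ | ⟨rfl, hr⟩
  · have : (2 * m - 1) * (j + 1) ≤ (2 * m - 1) * t := Nat.mul_le_mul_left _ hj
    rw [Nat.mul_succ] at this
    omega
  · omega

theorem exists_iterate_forcedNext_eq (hm : 5 ≤ m) (ht : t = m / 2 - 1) {s : ℕ × ℕ}
    (hs : Sq m (m - 2) s) : ∃ i < m * (m - 2), (forcedNext m t)^[i] (m - 2, 0) = s := by
  obtain ⟨p, q⟩ := s
  obtain ⟨hp, hq⟩ : p < m ∧ q < m - 2 := hs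
  have bound := round_index_lt_card hm ht
  by_cases hcol : p + q ≤ m - 3 ∨ t < p ∧ p + q = m - 2
  · have column : (forcedNext m t)^[q] (p, 0) = (p, q) :=
      iterate_forcedNext_column (by omega) (by omega)
    by_cases hpt : p < t ∨ p = t ∧ m = 2 * t + 3
    · exact ⟨_, bound p (m - 1 + q) (by omega),
        iterate_trans (iterate_forcedNext_round_mid hm (by omega) (by omega)) column (by omega)⟩
    · exact ⟨_, bound (m - 2 - p) q (by omega),
        iterate_trans (iterate_forcedNext_round_start hm (by omega) (by omega) (by omega)) column
          (by omega)⟩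
  rcases Nat.lt_or_ge (p + q) (m - 1) with hpq | hpq
  · have low_east : (forcedNext m t)^[m - 2 - (p - 1)] (p - 1, 0) = (p, q) := by
      rw [iterate_forcedNext_low_east (by omega) (by omega)]
      congr 1 <;> omega
    exact ⟨_, bound (p - 1) (m - 1 + (m - 2 - (p - 1))) (by omega),
      iterate_trans (iterate_forcedNext_round_mid hm (by omega) (by omega)) low_east (by omega)⟩
  by_cases hpt : p ≤ t + 1
  · have low : (forcedNext m t)^[q + 2] (p - 2, 0) = (p, q) := by
      rw [iterate_forcedNext_low (by omega) (by omega) (by omega) (by omega)]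
      congr 1
      omega
    exact ⟨_, bound (p - 2) (m - 1 + (q + 2)) (by omega),
      iterate_trans (iterate_forcedNext_round_mid hm (by omega) (by omega)) low (by omega)⟩
  · have high : (forcedNext m t)^[q + 1] (p - 1, 0) = (p, q) := by
      rw [iterate_forcedNext_high (by omega) (by omega) (by omega) (by omega)]
      congr 1
      omega
    exact ⟨_, bound (m - 2 - (p - 1)) (q + 1) (by omega),
      iterate_trans (iterate_forcedNext_round_start hm (by omega) (by omega) (by omega)) high
        (by omega)⟩

end Orbit

def IsNorthPath (m : ℕ) (τ : ℕ × ℕ) (l : List (ℕ × ℕ)) : Prop :=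
  HamPathFromTo m (m - 2) (m - 2, 0) τ l ∧
    ∀ s, Sq m (m - 2) s → ¬ SameDiag m (m - 2) s τ → TravelsNorth m (m - 2) l s

section Sufficiency

variable {m t i : ℕ}

def forcedPath (m t : ℕ) : List (ℕ × ℕ) :=
  (List.range (m * (m - 2))).map ((forcedNext m t)^[·] (m - 2, 0))

theorem length_forcedPath : (forcedPath m t).length = m * (m - 2) := by
  simp [forcedPath]

theorem getElem?_forcedPath (hi : i < m * (m - 2)) :
    (forcedPath m t)[i]? = some ((forcedNext m t)^[i] (m - 2, 0)) := by
  simp [forcedPath, hi]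

theorem isNorthPath_forcedPath (hm : 5 ≤ m) (ht : t = m / 2 - 1) :
    IsNorthPath m (t, m - 3 - t) (forcedPath m t) := by
  have hN : 0 < m * (m - 2) := Nat.mul_pos (by omega) (by omega)
  obtain ⟨k, hk, -, hlast⟩ := exists_iterate_forcedNext_eq_terminal (t := t) hm (by omega)
  have hlast := hlast.mpr ht
  refine ⟨⟨isHamPath_map_iterate (fun _ => edge_forcedNext) ⟨by omega, by omega⟩
    (fun _ => exists_iterate_forcedNext_eq hm ht), ?_, ?_⟩, ?_⟩
  · rw [List.head?_eq_getElem?, getElem?_forcedPath hN]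
    rfl
  · rw [List.getLast?_eq_getElem?, length_forcedPath, getElem?_forcedPath (by omega),
      show m * (m - 2) - 1 = k by omega, hk]
  · intro s hs hdiag
    obtain ⟨j, hj, rfl⟩ := exists_iterate_forcedNext_eq hm ht hs
    have hjk : j ≠ k := by
      rintro rfl
      rw [hk] at hdiag
      exact hdiag (.inl rfl)
    have heast : ¬ GoesEast m t ((forcedNext m t)^[j] (m - 2, 0)) := by
      unfold GoesEast SameDiag at *
      omega
    refine ⟨j, getElem?_forcedPath hj, ?_⟩
    rw [getElem?_forcedPath (by omega), Function.iterate_succ_apply', forcedNext, if_neg heast]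

end Sufficiency

namespace IsNorthPath

variable {m t : ℕ} {τ s : ℕ × ℕ} {l : List (ℕ × ℕ)}

theorem nodup (hl : IsNorthPath m τ l) : l.Nodup :=
  hl.1.1.2.1

theorem not_follows_start (hl : IsNorthPath m τ l) : ¬ Follows l s (m - 2, 0) :=
  not_follows_of_head? hl.nodup hl.1.2.1

theorem not_follows_terminal (hl : IsNorthPath m τ l) : ¬ Follows l τ s :=
  not_follows_of_getLast? hl.nodup hl.1.2.2

theorem follows_moveE_or_moveN (hl : IsNorthPath m τ l) (hs : Sq m (m - 2) s) (hsτ : s ≠ τ) :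
    Follows l s (moveE m (m - 2) s) ∨ Follows l s (moveN m (m - 2) s) :=
  hl.1.1.follows_moveE_or_moveN hl.1.2.2 hs hsτ

theorem follows_east_of_not_follows_north (hl : IsNorthPath m τ l) {a b : ℕ} (ha : a + 1 < m)
    (hb : 1 ≤ b) (hb' : b < m - 2) (hsouth : ¬ Follows l (a + 1, b - 1) (a + 1, b)) :
    Follows l (a, b) (a + 1, b) := by
  obtain ⟨y, hy, hfy⟩ := hl.1.1.exists_edge_follows hl.1.2.1 (s := (a + 1, b)) ⟨ha, hb'⟩
    (by simp only [ne_eq, Prod.mk.injEq]; omega)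
  rcases hy.eq_west_or_south (by omega) hb with rfl | rfl
  · exact hfy
  · exact absurd hfy hsouth

theorem terminal_sum_ge (hm : 5 ≤ m) (hl : IsNorthPath m τ l) :
    τ.1 + τ.2 = m - 3 ∨ τ.1 + τ.2 = m - 2 := by
  by_contra hτ
  have hnorth : Follows l (1, m - 3) (moveN m (m - 2) (1, m - 3)) :=
    hl.2 (1, m - 3) ⟨by omega, by omega⟩ (by unfold SameDiag; omega)
  rw [moveN_of_add_one_eq (by omega), show m - 1 - 1 = m - 2 by omega] at hnorth
  exact hl.not_follows_start hnorth

theorem not_follows_east (hm : 5 ≤ m) (hl : IsNorthPath m τ l) {q : ℕ} (hq : q ≤ m - 3)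
    (hτ : ∀ q', q < q' → q' ≤ m - 3 → (q', m - 3 - q') ≠ τ) :
    ¬ Follows l (q, m - 3 - q) (q + 1, m - 3 - q) := by
  obtain ⟨k, hk⟩ : ∃ k, q + k = m - 3 := ⟨m - 3 - q, by omega⟩
  induction k generalizing q with
  | zero =>
    obtain rfl : q = m - 3 := by omega
    rw [show (m - 3 + 1, m - 3 - (m - 3)) = (m - 2, 0) by congr 1 <;> omega]
    exact hl.not_follows_start
  | succ k ih =>
    intro hfollow
    rcases hl.follows_moveE_or_moveN (s := (q + 1, m - 3 - (q + 1))) ⟨by omega, by omega⟩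
      (hτ (q + 1) (by omega) (by omega)) with h | h
    · rw [moveE_of_lt (by omega)] at h
      exact ih (by omega) (fun q' h₁ h₂ => hτ q' (by omega) h₂) (by omega) h
    · rw [moveN_of_lt (by omega), show m - 3 - (q + 1) + 1 = m - 3 - q by omega] at h
      have := h.left_unique hl.nodup hfollow
      simp only [Prod.mk.injEq] at this
      omega

theorem terminal_sum (hm : 5 ≤ m) (hl : IsNorthPath m τ l) : τ.1 + τ.2 = m - 3 := by
  refine (hl.terminal_sum_ge hm).resolve_right fun hτ => ?_
  have hcorner : Follows l (0, m - 3) (moveN m (m - 2) (0, m - 3)) := by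
    refine (hl.follows_moveE_or_moveN ⟨by omega, by omega⟩ ?_).resolve_left ?_
    · rintro rfl
      simp only at hτ
      omega
    · rw [moveE_of_lt (by omega)]
      simpa using hl.not_follows_east hm (q := 0) (by omega) fun q' _ _ h => by
        subst h
        simp only at hτ
        omega
  refine not_follows_cycle hl.nodup (g := fun e => (moveN m (m - 2))^[e] (0, 0))
    (D := (m - 2) + (m - 2)) (by omega) (fun e he => ?_) ?_
  · simp only [Function.iterate_succ_apply']
    rcases Nat.lt_or_ge e (m - 2) with he' | he'
    · rw [iterate_moveN_of_lt he']
      by_cases hcorner' : e = m - 3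
      · exact hcorner' ▸ hcorner
      · exact hl.2 (0, e) ⟨by omega, he'⟩ (by unfold SameDiag; simp only; omega)
    · obtain ⟨e, rfl⟩ := Nat.exists_eq_add_of_le he'
      rw [add_comm, Function.iterate_add_apply, iterate_moveN_self (by omega),
        iterate_moveN_of_lt (by omega), Nat.sub_zero]
      exact hl.2 (m - 1, e) ⟨by omega, by omega⟩ (by unfold SameDiag; simp only; omega)
  · rw [Function.iterate_add_apply, iterate_moveN_self (by omega), iterate_moveN_self (by omega)]
    congr 1
    omega

theorem not_follows_north_of_sum_eq (hm : 5 ≤ m) (hl : IsNorthPath m τ l)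
    (hτ : τ.1 + τ.2 = m - 3) {p : ℕ} (hp : 1 ≤ p) (hp' : p ≤ m - 2) :
    ¬ Follows l (p, m - 2 - p) (moveN m (m - 2) (p, m - 2 - p)) := by
  induction p, hp using Nat.le_induction with
  | base =>
    rw [moveN_of_add_one_eq (by omega), show m - 1 - 1 = m - 2 by omega]
    exact hl.not_follows_start
  | succ p hp ih =>
    intro hfollow
    rw [moveN_of_lt (by omega), show m - 2 - (p + 1) + 1 = m - 2 - p by omega] at hfollow
    have hpτ : (p, m - 2 - p) ≠ τ := by
      rintro rfl
      simp only at hτ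
      omega
    rcases hl.follows_moveE_or_moveN ⟨by omega, by omega⟩ hpτ with h | h
    · rw [moveE_of_lt (by omega)] at h
      have := h.left_unique hl.nodup hfollow
      simp only [Prod.mk.injEq] at this
      omega
    · exact ih (by omega) h

theorem follows_east_of_sum_eq (hm : 5 ≤ m) (hl : IsNorthPath m τ l) (hτ : τ.1 + τ.2 = m - 3)
    {p : ℕ} (hp : 1 ≤ p) (hp' : p ≤ m - 2) : Follows l (p, m - 2 - p) (p + 1, m - 2 - p) := by
  have hpτ : (p, m - 2 - p) ≠ τ := by
    rintro rfl
    simp only at hτ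
    omega
  rcases hl.follows_moveE_or_moveN ⟨by omega, by omega⟩ hpτ with h | h
  · rwa [moveE_of_lt (by omega)] at h
  · exact absurd h (hl.not_follows_north_of_sum_eq hm hτ hp hp')

theorem follows_east_of_lt (hl : IsNorthPath m (t, m - 3 - t) l) (ht : t ≤ m - 3) {q : ℕ}
    (hq : q < t) : Follows l (q, m - 3 - q) (q + 1, m - 3 - q) := by
  obtain ⟨k, hk⟩ : ∃ k, q + k + 1 = t := ⟨t - 1 - q, by omega⟩
  induction k generalizing q with
  | zero =>
    refine hl.follows_east_of_not_follows_north (by omega) (by omega) (by omega) ?_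
    rw [show (q + 1, m - 3 - q - 1) = (t, m - 3 - t) by congr 1; omega]
    exact hl.not_follows_terminal
  | succ k ih =>
    refine hl.follows_east_of_not_follows_north (by omega) (by omega) (by omega) fun h => ?_
    have := (ih (q := q + 1) (by omega) (by omega)).right_unique hl.nodup
      (by rwa [show m - 3 - (q + 1) = m - 3 - q - 1 by omega])
    simp only [Prod.mk.injEq] at this
    omega

theorem follows_north_of_gt (hm : 5 ≤ m) (hl : IsNorthPath m (t, m - 3 - t) l) {q : ℕ}
    (hq : t < q) (hq' : q ≤ m - 3) : Follows l (q, m - 3 - q) (q, m - 2 - q) := by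
  rcases hl.follows_moveE_or_moveN (s := (q, m - 3 - q)) ⟨by omega, by omega⟩
    (by simp only [ne_eq, Prod.mk.injEq]; omega) with h | h
  · rw [moveE_of_lt (by omega)] at h
    refine absurd h (hl.not_follows_east hm hq' fun q' h₁ h₂ heq => ?_)
    simp only [Prod.mk.injEq] at heq
    omega
  · rwa [moveN_of_lt (by omega), show m - 3 - q + 1 = m - 2 - q by omega] at h

theorem follows_forcedNext (hm : 5 ≤ m) (hl : IsNorthPath m (t, m - 3 - t) l) (ht : t ≤ m - 3)
    (hs : Sq m (m - 2) s) (hsτ : s ≠ (t, m - 3 - t)) : Follows l s (forcedNext m t s) := by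
  obtain ⟨p, q⟩ := s
  obtain ⟨hp, hq⟩ : p < m ∧ q < m - 2 := hs
  by_cases hdiag : SameDiag m (m - 2) (p, q) (t, m - 3 - t)
  · simp only [SameDiag] at hdiag
    by_cases hsum : p + q = m - 2
    · obtain rfl : q = m - 2 - p := by omega
      rw [forcedNext_of_goesEast (.inl hsum) (by omega)]
      exact hl.follows_east_of_sum_eq hm (by simp only; omega) (by omega) (by omega)
    obtain rfl : q = m - 3 - p := by omega
    rcases Nat.lt_trichotomy p t with hpt | rfl | hpt
    · rw [forcedNext_of_goesEast (.inr ⟨by omega, hpt⟩) (by omega)]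
      exact hl.follows_east_of_lt ht hpt
    · exact absurd rfl hsτ
    · rw [forcedNext_of_not_goesEast (by simp only [GoesEast]; omega) (by omega),
        show m - 3 - p + 1 = m - 2 - p by omega]
      exact hl.follows_north_of_gt hm hpt (by omega)
  · rw [forcedNext, if_neg (by unfold GoesEast SameDiag at *; omega)]
    exact hl.2 _ ⟨hp, hq⟩ hdiag

theorem terminal_eq (hm : 5 ≤ m) (hl : IsNorthPath m τ l) : τ = (m / 2 - 1, (m - 1) / 2 - 1) := by
  obtain ⟨t, b⟩ := τ
  have hsum := hl.terminal_sum hm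
  obtain rfl : b = m - 3 - t := by simp only at hsum; omega
  obtain ⟨i, hi, hiN, hiff⟩ := exists_iterate_forcedNext_eq_terminal (t := t) hm (by omega)
  have horbit := getElem?_eq_iterate (f := forcedNext m t) hl.nodup hl.1.2.1 hl.1.2.2
    fun s hs hsτ => hl.follows_forcedNext hm (by omega) ((hl.1.1.2.2 s).mpr hs) hsτ
  have hlast := hl.1.2.2
  rw [List.getLast?_eq_getElem?, hl.1.1.length_eq] at hlast
  have := index_unique hl.nodup (hi ▸ horbit i (hl.1.1.length_eq ▸ hiN)) hlast
  have ht := hiff.mp (by omega)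
  congr 1
  omega

end IsNorthPath

theorem initTauPlus_general (m : ℕ) (hm : 5 ≤ m) (τ : ℕ × ℕ) :
    (∃ l, HamPathFromTo m (m - 2) (m - 2, 0) τ l ∧
        ∀ s, Sq m (m - 2) s → ¬ SameDiag m (m - 2) s τ → TravelsNorth m (m - 2) l s) ↔
    τ = (m / 2 - 1, (m - 1) / 2 - 1) := by
  refine ⟨fun ⟨_, hl⟩ => IsNorthPath.terminal_eq hm hl, ?_⟩
  rintro rfl
  rw [show (m - 1) / 2 - 1 = m - 3 - (m / 2 - 1) by omega]
  exact ⟨_, isNorthPath_forcedPath hm rfl⟩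

theorem initTauPlus (m : ℕ) (hm : 5 ≤ m) (τ : ℕ × ℕ) (hτ : Sq m (m - 2) τ) :
    (∃ l, HamPathFromTo m (m - 2) (m - 2, 0) τ l ∧
        ∀ s, Sq m (m - 2) s → ¬ SameDiag m (m - 2) s τ → TravelsNorth m (m - 2) l s) ↔
    τ = (m / 2 - 1, (m - 1) / 2 - 1) :=
  initTauPlus_general m hm τ

end ProjBoard
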